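/- Let W: ℝ^s → ℝ be strictly convex and C² with ∇²W(Â) ≻ 0, Σ̂ = ∇W(Â), and for λ > 0 let z^λ minimize W*(Σ̂ − λz) over {z : ‖z‖_∞ ≤ 1}. Then as λ → 0, z^λ converges to the minimizer of ⟨z, (∇²W(Â))^{-1} z⟩ over z ∈ ∂‖Â‖₁. -/

import Mathlib

/-!
Near `Σ̂ = ∇W(Â)` the gradient map has a `C¹` local inverse `g` (inverse function theorem, the
Hessian `H` being invertible), and there `W*(y) = ⟨y, g y⟩ - W (g y)` with `∇W* = g`, so
`D²W*(Σ̂) = H⁻¹`. A second-order Taylor expansion then gives, uniformly for `‖z‖_∞ ≤ 1`,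
`W*(Σ̂ - λz) = W*(Σ̂) - λ⟨Â, z⟩ + λ²/2 ⟨z, H⁻¹z⟩ + o(λ²)`.
Comparing `z^λ` with `zmin`, which maximises `⟨Â, ·⟩` on the cube, yields
`λ (⟨Â, zmin⟩ - ⟨Â, z^λ⟩) + λ²/2 (q z^λ - q zmin) ≤ o(λ²)` for `q z = ⟨z, H⁻¹z⟩`. Hence every
cluster point of `z^λ` in the compact cube maximises `⟨Â, ·⟩`, i.e. lies in `∂‖Â‖₁`, and has
`q ≤ q zmin`; strict convexity of `q` forces it to be `zmin`.
-/

open Matrix Filter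

/-- Legendre–Fenchel conjugate, with values in `EReal`. -/
noncomputable def fenchelConj {s : ℕ} (W : (Fin s → ℝ) → ℝ) (y : Fin s → ℝ) : EReal :=
  ⨆ A : Fin s → ℝ, ((y ⬝ᵥ A - W A : ℝ) : EReal)

/-- The subdifferential of the ℓ¹ norm at `A`. -/
def l1Subdiff {s : ℕ} (A : Fin s → ℝ) : Set (Fin s → ℝ) :=
  {z | (∀ i, |z i| ≤ 1) ∧ ∀ i, A i ≠ 0 → z i = Real.sign (A i)}

/-- Hessian matrix of a function on `ℝ^s`. -/
noncomputable def hessianMatrix {s : ℕ} (W : (Fin s → ℝ) → ℝ) (A : Fin s → ℝ) :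
    Matrix (Fin s) (Fin s) ℝ :=
  fun i j => fderiv ℝ (fun x => fderiv ℝ W x (Pi.single j 1)) A (Pi.single i 1)

open scoped Topology

open Asymptotics in
theorem taylor_two_isLittleO {E F : Type*} [NormedAddCommGroup E] [NormedSpace ℝ E]
    [NormedAddCommGroup F] [NormedSpace ℝ F] {f : E → F} {f' : E → E →L[ℝ] F}
    {f'' : E →L[ℝ] E →L[ℝ] F} {x : E}
    (hf : ∀ᶠ y in 𝓝 x, HasFDerivAt f (f' y) y) (hf' : HasFDerivAt f' f'' x) :
    (fun v => f (x + v) - f x - f' x v - (2⁻¹ : ℝ) • f'' v v) =o[𝓝 0]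
      fun v => ‖v‖ ^ 2 := by
  refine isLittleO_iff.2 fun ε hε => ?_
  have hlin := (hasFDerivAt_iff_isLittleO_nhds_zero.1 hf').def hε
  have hder : ∀ᶠ u in 𝓝 (0 : E), HasFDerivAt f (f' (x + u)) (x + u) :=
    ((continuous_const_add x).tendsto' 0 x (add_zero x)).eventually hf
  obtain ⟨δ, hδ, hball⟩ := Metric.eventually_nhds_iff_ball.1 (hlin.and hder)
  filter_upwards [Metric.ball_mem_nhds 0 hδ] with v hv
  have hseg : ∀ t ∈ Set.Icc (0 : ℝ) 1, t • v ∈ Metric.ball (0 : E) δ := fun t ht => by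
    simp only [Metric.mem_ball, dist_zero_right, norm_smul, Real.norm_eq_abs,
      abs_of_nonneg ht.1] at hv ⊢
    nlinarith [norm_nonneg v, ht.2]
  have hχ : ∀ t ∈ Set.Icc (0 : ℝ) 1, HasDerivWithinAt
      (fun t : ℝ => f (x + t • v) - t • f' x v - (t ^ 2 / 2) • f'' v v)
      ((f' (x + t • v) - f' x - f'' (t • v)) v) (Set.Icc 0 1) t := by
    intro t ht
    have h1 : HasDerivAt (fun t : ℝ => f (x + t • v)) (f' (x + t • v) v) t :=
      (hball _ (hseg t ht)).2.comp_hasDerivAt t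
        (by simpa using ((hasDerivAt_id t).smul_const v).const_add x)
    have h2 : HasDerivAt (fun t : ℝ => (t ^ 2 / 2) • f'' v v) (t • f'' v v) t := by
      convert ((hasDerivAt_pow 2 t).div_const 2).smul_const (f'' v v) using 1
      simp
    refine (((h1.sub ((hasDerivAt_id t).smul_const (f' x v))).sub h2).congr_deriv
      ?_).hasDerivWithinAt
    simp
  have hbound : ∀ t ∈ Set.Ico (0 : ℝ) 1,
      ‖(f' (x + t • v) - f' x - f'' (t • v)) v‖ ≤ ε * ‖v‖ ^ 2 := by
    intro t ht
    have hnorm : ‖t • v‖ ≤ ‖v‖ := by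
      rw [norm_smul, Real.norm_eq_abs, abs_of_nonneg ht.1]
      exact mul_le_of_le_one_left (norm_nonneg v) ht.2.le
    calc ‖(f' (x + t • v) - f' x - f'' (t • v)) v‖
        ≤ ‖f' (x + t • v) - f' x - f'' (t • v)‖ * ‖v‖ := ContinuousLinearMap.le_opNorm _ _
      _ ≤ ε * ‖t • v‖ * ‖v‖ := by
        gcongr; exact (hball _ (hseg t (Set.Ico_subset_Icc_self ht))).1
      _ ≤ ε * ‖v‖ ^ 2 := by rw [sq, ← mul_assoc]; gcongr
  have := norm_image_sub_le_of_norm_deriv_le_segment' hχ hbound 1 (by simp)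
  rw [norm_pow, norm_norm]
  calc _ = _ := by norm_num; abel_nf
    _ ≤ _ := this
    _ = ε * ‖v‖ ^ 2 := by ring

theorem ConvexOn.add_le_of_hasFDerivAt {E : Type*} [NormedAddCommGroup E] [NormedSpace ℝ E]
    {S : Set E} {f : E → ℝ} {f' : E →L[ℝ] ℝ} {x y : E} (hf : ConvexOn ℝ S f) (hx : x ∈ S)
    (hy : y ∈ S) (hf' : HasFDerivAt f f' x) : f x + f' (y - x) ≤ f y := by
  have hline : ConvexOn ℝ (AffineMap.lineMap (k := ℝ) x y ⁻¹' S)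
      (f ∘ AffineMap.lineMap (k := ℝ) x y) :=
    hf.comp_affineMap _
  have hderiv : HasDerivAt (f ∘ AffineMap.lineMap (k := ℝ) x y) (f' (y - x)) 0 := by
    refine hf'.comp_hasDerivAt_of_eq 0 AffineMap.hasDerivAt_lineMap ?_
    simp
  have := hline.le_slope_of_hasDerivAt (by simpa using hx) (by simpa using hy) one_pos hderiv
  simp only [slope_def_field, Function.comp_apply, AffineMap.lineMap_apply_one,
    AffineMap.lineMap_apply_zero, sub_zero, div_one] at this
  linarith

theorem tendsto_nhds_of_lexicographic_le {X : Type*} [TopologicalSpace X] {K : Set X}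
    (hK : IsCompact K) {f q : X → ℝ} (hf : Continuous f) (hq : Continuous q) {x₀ : X}
    (hf₀ : ∀ x ∈ K, f x₀ ≤ f x) (huniq : ∀ x ∈ K, f x ≤ f x₀ → q x ≤ q x₀ → x = x₀)
    {z : ℝ → X} (hzK : ∀ l > 0, z l ∈ K)
    (hz : ∀ ε > 0, ∀ᶠ l in 𝓝[>] 0,
      l * (f (z l) - f x₀) + l ^ 2 * (q (z l) - q x₀) ≤ ε * l ^ 2) :
    Tendsto z (𝓝[>] 0) (𝓝 x₀) := by
  have hzK' : ∀ᶠ l in 𝓝[>] (0 : ℝ), z l ∈ K := eventually_nhdsWithin_of_forall hzK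
  obtain ⟨M, hM⟩ := hK.exists_bound_of_continuousOn (hq.sub continuous_const).continuousOn
  have hf_le : ∀ η > 0, ∀ᶠ l in 𝓝[>] 0, f (z l) ≤ f x₀ + η := by
    intro η hη
    filter_upwards [hz 1 one_pos, hzK',
      Ioo_mem_nhdsGT (div_pos hη (by positivity : 0 < 1 + |M|))] with l hl hlK ⟨hl0, hlη⟩
    have hqM : -|M| ≤ q (z l) - q x₀ :=
      (neg_le_neg (le_abs_self M)).trans (abs_le.1 (by simpa using hM _ hlK)).1
    rw [lt_div_iff₀ (by positivity)] at hlη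
    nlinarith [mul_le_mul_of_nonneg_left hqM (sq_nonneg l)]
  have hq_le : ∀ ε > 0, ∀ᶠ l in 𝓝[>] 0, q (z l) ≤ q x₀ + ε := by
    intro ε hε
    filter_upwards [hz ε hε, hzK', self_mem_nhdsWithin] with l hl hlK (hl0 : 0 < l)
    nlinarith [mul_nonneg hl0.le (sub_nonneg.2 (hf₀ _ hlK)), pow_pos hl0 2]
  refine hK.tendsto_nhds_of_unique_mapClusterPt hzK' fun x hxK hx => huniq x hxK ?_ ?_
  · exact le_of_forall_pos_le_add fun η hη =>
      (isClosed_le hf continuous_const).mem_of_mapClusterPt hx (hf_le η hη)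
  · exact le_of_forall_pos_le_add fun ε hε =>
      (isClosed_le hq continuous_const).mem_of_mapClusterPt hx (hq_le ε hε)

theorem eventually_forall_norm_le_one_smul {E : Type*} [SeminormedAddCommGroup E]
    [NormedSpace ℝ E] {P : E → Prop} (h : ∀ᶠ v in 𝓝 0, P v) :
    ∀ᶠ l in 𝓝 (0 : ℝ), ∀ z ∈ Metric.closedBall (0 : E) 1, P (l • z) := by
  obtain ⟨δ, hδ, hP⟩ := Metric.eventually_nhds_iff_ball.1 h
  filter_upwards [Metric.ball_mem_nhds 0 hδ] with l hl z hz
  refine hP _ (mem_ball_zero_iff.2 (lt_of_le_of_lt ?_ (mem_ball_zero_iff.1 hl)))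
  rw [norm_smul]
  exact mul_le_of_le_one_right (norm_nonneg l) (mem_closedBall_zero_iff.1 hz)

theorem Real.mul_sign_self (a : ℝ) : a * Real.sign a = |a| := by
  rcases lt_trichotomy a 0 with h | rfl | h
  · rw [Real.sign_of_neg h, abs_of_neg h, mul_neg_one]
  · simp
  · rw [Real.sign_of_pos h, abs_of_pos h, mul_one]

theorem Real.eq_sign_of_mul_eq_abs {a z : ℝ} (ha : a ≠ 0) (h : a * z = |a|) : z = Real.sign a :=
  mul_left_cancel₀ ha (h.trans (Real.mul_sign_self a).symm)

theorem mul_le_abs_of_abs_le_one {a z : ℝ} (hz : |z| ≤ 1) : a * z ≤ |a| :=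
  (le_abs_self _).trans (by rw [abs_mul]; exact mul_le_of_le_one_right (abs_nonneg a) hz)

section Coordinates

variable {n : Type*} [Fintype n]

theorem ContinuousLinearMap.apply_eq_dotProduct_single [DecidableEq n] (L : (n → ℝ) →L[ℝ] ℝ)
    (v : n → ℝ) :
    L v = v ⬝ᵥ fun i => L (Pi.single i 1) := by
  conv_lhs => rw [← Finset.univ_sum_single v]
  refine (map_sum L _ _).trans (Finset.sum_congr rfl fun i _ => ?_)
  rw [← smul_eq_mul, ← map_smul, ← Pi.single_smul', smul_eq_mul, mul_one]

noncomputable def gradientVec [DecidableEq n] (W : (n → ℝ) → ℝ) (A : n → ℝ) : n → ℝ :=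
  fun i => fderiv ℝ W A (Pi.single i 1)

theorem fderiv_apply_eq_dotProduct_gradientVec [DecidableEq n] (W : (n → ℝ) → ℝ)
    (A v : n → ℝ) :
    fderiv ℝ W A v = v ⬝ᵥ gradientVec W A :=
  (fderiv ℝ W A).apply_eq_dotProduct_single v

theorem ContDiff.gradientVec [DecidableEq n] {W : (n → ℝ) → ℝ} (hW : ContDiff ℝ 2 W) :
    ContDiff ℝ 1 (gradientVec W) :=
  contDiff_pi.2 fun _ => (hW.fderiv_right le_rfl).clm_apply contDiff_const

noncomputable def dotProductCLM : (n → ℝ) →L[ℝ] (n → ℝ) →L[ℝ] ℝ :=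
  LinearMap.toContinuousLinearMap
    (LinearMap.toContinuousLinearMap.toLinearMap ∘ₗ dotProductBilin ℝ ℝ)

@[simp] theorem dotProductCLM_apply (a v : n → ℝ) : dotProductCLM a v = a ⬝ᵥ v := rfl

theorem hasFDerivAt_dotProduct_sub_comp [DecidableEq n] {W : (n → ℝ) → ℝ}
    {g : (n → ℝ) → n → ℝ} {g' : (n → ℝ) →L[ℝ] n → ℝ} {y : n → ℝ} (hg : HasFDerivAt g g' y)
    (hW : DifferentiableAt ℝ W (g y)) (hgy : gradientVec W (g y) = y) :
    HasFDerivAt (fun y => y ⬝ᵥ g y - W (g y)) (dotProductCLM (g y)) y := by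
  have hdot : HasFDerivAt (fun y => dotProductCLM y (g y)) _ y :=
    dotProductCLM.hasFDerivAt.clm_apply hg
  refine (hdot.sub (hW.hasFDerivAt.comp y hg)).congr_fderiv ?_
  ext v
  simp [fderiv_apply_eq_dotProduct_gradientVec, hgy, dotProduct_comm]

noncomputable def Matrix.vecMulCLE [DecidableEq n] (M : Matrix n n ℝ) (hM : IsUnit M.det) :
    (n → ℝ) ≃L[ℝ] (n → ℝ) :=
  LinearEquiv.toContinuousLinearEquiv
    { toFun := fun v => v ᵥ* M
      invFun := fun v => v ᵥ* M⁻¹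
      map_add' := fun u v => add_vecMul M u v
      map_smul' := fun c v => smul_vecMul c v M
      left_inv := fun v => by simp [vecMul_vecMul, mul_nonsing_inv M hM]
      right_inv := fun v => by simp [vecMul_vecMul, nonsing_inv_mul M hM] }

@[simp] theorem Matrix.vecMulCLE_apply [DecidableEq n] (M : Matrix n n ℝ) (hM : IsUnit M.det)
    (v : n → ℝ) : M.vecMulCLE hM v = v ᵥ* M := rfl

@[simp] theorem Matrix.vecMulCLE_symm_apply [DecidableEq n] (M : Matrix n n ℝ)
    (hM : IsUnit M.det) (v : n → ℝ) : (M.vecMulCLE hM).symm v = v ᵥ* M⁻¹ := rfl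

theorem Matrix.PosDef.strictConvexOn_dotProduct_mulVec {M : Matrix n n ℝ} (hM : M.PosDef) :
    StrictConvexOn ℝ Set.univ fun x => x ⬝ᵥ (M *ᵥ x) := by
  refine ⟨convex_univ, fun x _ y _ hxy a b ha hb hab => ?_⟩
  have hpos : 0 < (x - y) ⬝ᵥ (M *ᵥ (x - y)) := by
    simpa using hM.dotProduct_mulVec_pos (sub_ne_zero.2 hxy)
  have hgap : a • (x ⬝ᵥ (M *ᵥ x)) + b • (y ⬝ᵥ (M *ᵥ y))
      - (a • x + b • y) ⬝ᵥ (M *ᵥ (a • x + b • y))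
        = a * b * ((x - y) ⬝ᵥ (M *ᵥ (x - y))) := by
    obtain rfl : b = 1 - a := by linarith
    simp only [smul_eq_mul, mulVec_add, mulVec_sub, mulVec_smul, dotProduct_add, dotProduct_sub,
      add_dotProduct, sub_dotProduct, dotProduct_smul, smul_dotProduct]
    ring
  nlinarith [mul_pos (mul_pos ha hb) hpos]

theorem dotProduct_le_sum_abs {z : n → ℝ} (hz : ∀ i, |z i| ≤ 1) (A : n → ℝ) :
    A ⬝ᵥ z ≤ ∑ i, |A i| :=
  Finset.sum_le_sum fun i _ => mul_le_abs_of_abs_le_one (hz i)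

end Coordinates

section FenchelConj

variable {s : ℕ}

theorem fenchelConj_eq_of_gradientVec_eq {W : (Fin s → ℝ) → ℝ} (hW : ConvexOn ℝ Set.univ W)
    {B y : Fin s → ℝ} (hWB : DifferentiableAt ℝ W B)
    (hy : gradientVec W B = y) : fenchelConj W y = ((y ⬝ᵥ B - W B : ℝ) : EReal) := by
  refine le_antisymm (iSup_le fun A => EReal.coe_le_coe_iff.2 ?_) (le_iSup_of_le B le_rfl)
  have := hW.add_le_of_hasFDerivAt (Set.mem_univ B) (Set.mem_univ A) hWB.hasFDerivAt
  rw [fderiv_apply_eq_dotProduct_gradientVec, hy, sub_dotProduct, dotProduct_comm A,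
    dotProduct_comm B] at this
  linarith

-- The row-vector form `v ᵥ* H` matches the index order of `hessianMatrix` without using the
-- symmetry of the Hessian.
theorem fderiv_gradientVec_apply {W : (Fin s → ℝ) → ℝ} (hW : ContDiff ℝ 2 W) (A v : Fin s → ℝ) :
    fderiv ℝ (gradientVec W) A v = v ᵥ* hessianMatrix W A := by
  have hpartial : ∀ j, DifferentiableAt ℝ (fun x => fderiv ℝ W x (Pi.single j 1)) A := fun j =>
    ((hW.fderiv_right le_rfl).clm_apply contDiff_const).differentiable one_ne_zero A
  rw [show gradientVec W = fun x j => fderiv ℝ W x (Pi.single j 1) from rfl,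
    fderiv_pi hpartial]
  ext j
  exact fderiv_apply_eq_dotProduct_gradientVec _ A v

theorem hasFDerivAt_gradientVec {W : (Fin s → ℝ) → ℝ} (hW : ContDiff ℝ 2 W)
    {A : Fin s → ℝ} (hH : IsUnit (hessianMatrix W A).det) :
    HasFDerivAt (gradientVec W) ((hessianMatrix W A).vecMulCLE hH : _ →L[ℝ] _) A := by
  refine (hW.gradientVec.differentiable one_ne_zero A).hasFDerivAt.congr_fderiv ?_
  ext1 v
  simp [fderiv_gradientVec_apply hW]

theorem exists_fenchelConj_taylor {W : (Fin s → ℝ) → ℝ} (hconv : ConvexOn ℝ Set.univ W)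
    (hW : ContDiff ℝ 2 W) {A : Fin s → ℝ} (hH : IsUnit (hessianMatrix W A).det) :
    ∃ φ : (Fin s → ℝ) → ℝ, (∀ᶠ y in 𝓝 (gradientVec W A), fenchelConj W y = φ y) ∧
      (fun v => φ (gradientVec W A + v) - φ (gradientVec W A) - A ⬝ᵥ v
        - 2⁻¹ * (v ⬝ᵥ ((hessianMatrix W A)⁻¹ *ᵥ v))) =o[𝓝 0] fun v => ‖v‖ ^ 2 := by
  have hC : ContDiffAt ℝ 1 (gradientVec W) A := hW.gradientVec.contDiffAt
  have hF := hasFDerivAt_gradientVec hW hH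
  set g := hC.localInverse hF one_ne_zero
  have hg₀ : g (gradientVec W A) = A := hC.localInverse_apply_image hF one_ne_zero
  have hg' : HasFDerivAt g (((hessianMatrix W A).vecMulCLE hH).symm : _ →L[ℝ] _)
      (gradientVec W A) := (hC.hasStrictFDerivAt' hF one_ne_zero).to_localInverse.hasFDerivAt
  have hnear : ∀ᶠ y in 𝓝 (gradientVec W A),
      gradientVec W (g y) = y ∧ DifferentiableAt ℝ g y :=
    (hC.hasStrictFDerivAt' hF one_ne_zero).eventually_right_inverse.and
      (((hC.to_localInverse hF one_ne_zero).eventually (by simp)).mono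
        fun y hy => hy.differentiableAt one_ne_zero)
  have hWd := hW.differentiable two_ne_zero
  refine ⟨fun y => y ⬝ᵥ g y - W (g y), hnear.mono fun y hy =>
    fenchelConj_eq_of_gradientVec_eq hconv (hWd _) hy.1, ?_⟩
  refine (taylor_two_isLittleO (f' := fun y => dotProductCLM (g y))
    (hnear.mono fun y hy => hasFDerivAt_dotProduct_sub_comp hy.2.hasFDerivAt (hWd _) hy.1)
    (dotProductCLM.hasFDerivAt.comp _ hg')).congr_left fun v => ?_
  simp [hg₀, dotProduct_mulVec, dotProduct_comm]

theorem exists_fenchelConj_sub_smul_approx {W : (Fin s → ℝ) → ℝ}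
    (hconv : ConvexOn ℝ Set.univ W) (hW : ContDiff ℝ 2 W) {A : Fin s → ℝ}
    (hH : IsUnit (hessianMatrix W A).det) :
    ∃ φ : (Fin s → ℝ) → ℝ, ∀ ε > 0, ∀ᶠ l in 𝓝 (0 : ℝ), ∀ z ∈ Metric.closedBall 0 1,
      fenchelConj W (gradientVec W A - l • z) = φ (gradientVec W A - l • z) ∧
      |φ (gradientVec W A - l • z) - φ (gradientVec W A) + l * (A ⬝ᵥ z)
        - l ^ 2 / 2 * (z ⬝ᵥ ((hessianMatrix W A)⁻¹ *ᵥ z))| ≤ ε * l ^ 2 := by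
  obtain ⟨φ, hφW, hφ⟩ := exists_fenchelConj_taylor hconv hW hH
  refine ⟨φ, fun ε hε => ?_⟩
  have hnear : ∀ᶠ v in 𝓝 (0 : Fin s → ℝ), fenchelConj W (gradientVec W A + v)
      = φ (gradientVec W A + v) :=
    ((continuous_const_add _).tendsto' 0 _ (add_zero _)).eventually hφW
  filter_upwards [(continuous_neg.tendsto' 0 0 neg_zero).eventually
    (eventually_forall_norm_le_one_smul (hnear.and (hφ.def hε)))] with l hl z hz
  obtain ⟨hconj, hbound⟩ := hl z hz
  have hlz : ‖l • z‖ ^ 2 ≤ l ^ 2 := by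
    rw [norm_smul, mul_pow, Real.norm_eq_abs, sq_abs]
    exact mul_le_of_le_one_right (sq_nonneg l)
      (pow_le_one₀ (norm_nonneg z) (mem_closedBall_zero_iff.1 hz))
  simp only [neg_smul, ← sub_eq_add_neg, norm_pow, norm_norm, norm_neg] at hconj hbound
  refine ⟨hconj, (le_of_eq ?_).trans (hbound.trans (by gcongr))⟩
  rw [Real.norm_eq_abs]
  congr 1
  simp only [dotProduct_neg, neg_dotProduct, mulVec_neg, dotProduct_smul, smul_dotProduct,
    mulVec_smul, smul_eq_mul]
  ring

theorem mem_l1Subdiff_iff {A z : Fin s → ℝ} (hz : ∀ i, |z i| ≤ 1) :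
    z ∈ l1Subdiff A ↔ A ⬝ᵥ z = ∑ i, |A i| := by
  refine ⟨fun ⟨_, hsign⟩ => Finset.sum_congr rfl fun i _ => ?_, fun h => ⟨hz, fun i hi => ?_⟩⟩
  · by_cases hi : A i = 0
    · simp [hi]
    · rw [hsign i hi, Real.mul_sign_self]
  · exact Real.eq_sign_of_mul_eq_abs hi <| (Finset.sum_eq_sum_iff_of_le fun i _ =>
      mul_le_abs_of_abs_le_one (hz i)).1 h i (Finset.mem_univ i)

theorem convex_l1Subdiff (A : Fin s → ℝ) : Convex ℝ (l1Subdiff A) := by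
  rintro x ⟨hx, hxs⟩ y ⟨hy, hys⟩ a b ha hb hab
  refine ⟨fun i => ?_, fun i hi => ?_⟩
  · calc |a * x i + b * y i| ≤ a * |x i| + b * |y i| := by
          simpa [abs_mul, abs_of_nonneg ha, abs_of_nonneg hb] using
            abs_add_le (a * x i) (b * y i)
      _ ≤ a * 1 + b * 1 := by gcongr <;> simp_all
      _ = 1 := by rw [mul_one, mul_one, hab]
  · simp [hxs i hi, hys i hi, ← add_mul, hab]

end FenchelConj

/-- with `W` strictly convex, C², `∇²W(Â) ≻ 0`, `Σ̂ = ∇W(Â)`, and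
`z^λ` a minimizer of `z ↦ W*(Σ̂ − λ z)` over `{‖z‖_∞ ≤ 1}`, as `λ → 0⁺` the
selection `z^λ` converges to the minimizer of `⟨z, (∇²W(Â))⁻¹ z⟩` over `∂‖Â‖₁`. -/
theorem minimal_norm_certificate_limit {s : ℕ}
    (W : (Fin s → ℝ) → ℝ)
    (hWconv : StrictConvexOn ℝ Set.univ W)
    (hWsmooth : ContDiff ℝ 2 W)
    (Ahat : Fin s → ℝ)
    (hHpd : (hessianMatrix W Ahat).PosDef)
    (Shat : Fin s → ℝ)
    (hShat : ∀ i, Shat i = fderiv ℝ W Ahat (Pi.single i 1))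
    (zsel : ℝ → (Fin s → ℝ))
    (hfeas : ∀ l : ℝ, 0 < l → ∀ i, |zsel l i| ≤ 1)
    (hopt : ∀ l : ℝ, 0 < l → ∀ z : Fin s → ℝ, (∀ i, |z i| ≤ 1) →
      fenchelConj W (Shat - l • zsel l) ≤ fenchelConj W (Shat - l • z))
    (zmin : Fin s → ℝ)
    (hzmin : zmin ∈ l1Subdiff Ahat)
    (hzminopt : ∀ z ∈ l1Subdiff Ahat,
      zmin ⬝ᵥ ((hessianMatrix W Ahat)⁻¹ *ᵥ zmin) ≤ z ⬝ᵥ ((hessianMatrix W Ahat)⁻¹ *ᵥ z)) :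
    Tendsto zsel (nhdsWithin 0 (Set.Ioi 0)) (nhds zmin) := by
  set q := fun z : Fin s → ℝ => z ⬝ᵥ ((hessianMatrix W Ahat)⁻¹ *ᵥ z)
  have hcube : ∀ z : Fin s → ℝ, z ∈ Metric.closedBall 0 1 ↔ ∀ i, |z i| ≤ 1 := fun z => by
    simp [pi_norm_le_iff_of_nonneg zero_le_one]
  have hzmin_sum := (mem_l1Subdiff_iff hzmin.1).1 hzmin
  obtain ⟨φ, hφ⟩ := exists_fenchelConj_sub_smul_approx hWconv.convexOn hWsmooth
    ((isUnit_iff_isUnit_det _).1 hHpd.isUnit)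
  rw [show gradientVec W Ahat = Shat from funext fun i => (hShat i).symm] at hφ
  refine tendsto_nhds_of_lexicographic_le (isCompact_closedBall 0 1)
    (f := fun z => -(Ahat ⬝ᵥ z)) (q := fun z => q z / 2) (by fun_prop) (by fun_prop)
    (fun z hz => ?_) (fun z hz hfz hqz => ?_) (fun l hl => (hcube _).2 (hfeas l hl)) fun ε hε => ?_
  · simpa [hzmin_sum] using dotProduct_le_sum_abs ((hcube z).1 hz) Ahat
  · have hzA : z ∈ l1Subdiff Ahat := (mem_l1Subdiff_iff ((hcube z).1 hz)).2 <|
      le_antisymm (dotProduct_le_sum_abs ((hcube z).1 hz) Ahat) (by simpa [hzmin_sum] using hfz)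
    have hqz' : q z ≤ q zmin := by linarith [hqz]
    exact (hHpd.inv.strictConvexOn_dotProduct_mulVec.subset (Set.subset_univ _)
      (convex_l1Subdiff Ahat)).eq_of_isMinOn (fun w hw => hqz'.trans (hzminopt w hw))
      hzminopt hzA hzmin
  · filter_upwards [nhdsWithin_le_nhds (hφ (ε / 2) (half_pos hε)), self_mem_nhdsWithin]
      with l hl (hl0 : 0 < l)
    obtain ⟨hsel, hsel'⟩ := hl (zsel l) ((hcube _).2 (hfeas l hl0))
    obtain ⟨hmin, hmin'⟩ := hl zmin ((hcube _).2 hzmin.1)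
    have := hopt l hl0 zmin hzmin.1
    rw [hsel, hmin, EReal.coe_le_coe_iff] at this
    nlinarith [abs_le.1 hsel', abs_le.1 hmin']
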